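/- arXiv:2308.00496 — 2 statements merged into one kernel-verified Lean document; each statement's English description precedes it below -/
import Mathlib

section
/- Let τ ≥ 0, T > τ, b, c ∈ ℝ, and define the energy J(v) = ∫₀^T (v′(t) + b·v(t) + c·v(t−τ))² dt, where v(t) := 0 for t ∈ [−τ, 0]. There exists a constant C₁ > 0 such that J(v) ≥ C₁ ‖v‖²_{H¹(0,T)} for all v ∈ H¹(0, T) with v(0) = 0 and v(t) = 0 for t ∈ [T−τ, T]. -/
open MeasureTheory intervalIntegral Set

/-!
Write `w = v' + b v + c v(· - τ)`, `J = ∫₀ᵀ w²` and `G(t) = ∫₀ᵗ v²`. Since `v` vanishes on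
`[-τ, 0]`, the delayed term satisfies `∫₀ᵗ v(s - τ)² ≤ G(t)`, so `∫₀ᵗ v'² ≤ 3J + 3(b² + c²) G(t)`.
As `v(0) = 0`, Cauchy–Schwarz gives `G'(t) = v(t)² ≤ t ∫₀ᵗ v'²`, a linear differential
inequality for `G` with source proportional to `J`. Grönwall bounds `G(T)`, hence also `∫₀ᵀ v'²`,
by a multiple of `J` that depends only on `T`, `b` and `c`.
-/

lemma gronwallBound_zero_mul (K ε J x : ℝ) :
    gronwallBound 0 K (J * ε) x = J * gronwallBound 0 K ε x := by
  unfold gronwallBound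
  split_ifs <;> ring

lemma gronwallBound_zero_nonneg {K ε x : ℝ} (hK : 0 ≤ K) (hε : 0 ≤ ε) (hx : 0 ≤ x) :
    0 ≤ gronwallBound 0 K ε x :=
  (gronwallBound_x0 0 K ε).symm.trans_le (gronwallBound_mono le_rfl hε hK hx)

lemma IntervalIntegrable.of_sq {f : ℝ → ℝ} {a b : ℝ} (hf : AEStronglyMeasurable f volume)
    (hf2 : IntervalIntegrable (fun s => f s ^ 2) volume a b) :
    IntervalIntegrable f volume a b := by
  rw [intervalIntegrable_iff] at hf2 ⊢
  have : IsFiniteMeasure (volume.restrict (uIoc a b)) :=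
    isFiniteMeasure_restrict.2 (by simp [uIoc])
  exact ((memLp_two_iff_integrable_sq hf.restrict).2 hf2).integrable one_le_two

lemma sq_integral_le_mul_integral_sq {f : ℝ → ℝ} {a b : ℝ} (hab : a ≤ b)
    (hf : IntervalIntegrable f volume a b)
    (hf2 : IntervalIntegrable (fun s => f s ^ 2) volume a b) :
    (∫ s in a..b, f s) ^ 2 ≤ (b - a) * ∫ s in a..b, f s ^ 2 := by
  rcases hab.eq_or_lt with rfl | hlt
  · simp
  set I := ∫ s in a..b, f s
  set m := I / (b - a)
  have hm : m * (b - a) = I := div_mul_cancel₀ _ (sub_pos.2 hlt).ne'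
  have hvar : 0 ≤ ∫ s in a..b, (f s - m) ^ 2 := integral_nonneg hab fun _ _ => sq_nonneg _
  have hexpand : ∫ s in a..b, (f s - m) ^ 2
      = (∫ s in a..b, f s ^ 2) - 2 * m * I + m ^ 2 * (b - a) := by
    simp_rw [sub_sq, mul_right_comm 2 _ m, mul_comm _ m]
    rw [integral_add (hf2.sub (hf.const_mul _)) intervalIntegrable_const,
      integral_sub hf2 (hf.const_mul _), intervalIntegral.integral_const_mul,
      intervalIntegral.integral_const, smul_eq_mul]
    ring
  nlinarith [mul_nonneg (sub_pos.2 hlt).le hvar]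

lemma sq_le_mul_integral_sq_deriv {v v' : ℝ → ℝ} {a t : ℝ}
    (hderiv : ∀ s, HasDerivAt v (v' s) s) (ha : v a = 0) (hat : a ≤ t)
    (hv' : IntervalIntegrable (fun s => v' s ^ 2) volume a t) :
    v t ^ 2 ≤ (t - a) * ∫ s in a..t, v' s ^ 2 := by
  have hmeas : Measurable v' := by
    rw [show v' = deriv v from funext fun s => (hderiv s).deriv.symm]
    exact measurable_deriv v
  have hv'int : IntervalIntegrable v' volume a t := hv'.of_sq hmeas.aestronglyMeasurable
  rw [← sub_zero (v t), ← ha, ← integral_eq_sub_of_hasDerivAt (fun s _ => hderiv s) hv'int]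
  exact sq_integral_le_mul_integral_sq hat hv'int hv'

lemma integral_comp_sub_le_integral {g : ℝ → ℝ} {τ : ℝ} (hτ : 0 ≤ τ) (hg : Continuous g)
    (hg0 : 0 ≤ g) (hzero : EqOn g 0 (Icc (-τ) 0)) (t : ℝ) :
    ∫ s in (0:ℝ)..t, g (s - τ) ≤ ∫ s in (0:ℝ)..t, g s := by
  have hpre : ∫ s in (-τ)..0, g s = 0 := by
    rw [integral_congr (g := 0) (by rwa [uIcc_of_le (neg_nonpos.2 hτ)])]
    simp
  rw [integral_comp_sub_right, zero_sub,
    ← integral_add_adjacent_intervals (hg.intervalIntegrable _ 0) (hg.intervalIntegrable 0 _),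
    hpre, zero_add, ← sub_nonneg,
    integral_interval_sub_left (hg.intervalIntegrable _ _) (hg.intervalIntegrable _ _)]
  exact integral_nonneg (by linarith) fun s _ => hg0 s

lemma integral_sq_deriv_le_of_delay {v v' : ℝ → ℝ} {τ b c t : ℝ} (hτ : 0 ≤ τ) (ht : 0 ≤ t)
    (hv : Continuous v) (hpre : ∀ s ∈ Icc (-τ) 0, v s = 0)
    (hv' : IntervalIntegrable (fun s => v' s ^ 2) volume 0 t)
    (hw : IntervalIntegrable (fun s => (v' s + b * v s + c * v (s - τ)) ^ 2) volume 0 t) :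
    ∫ s in (0:ℝ)..t, v' s ^ 2
      ≤ 3 * (∫ s in (0:ℝ)..t, (v' s + b * v s + c * v (s - τ)) ^ 2)
        + 3 * (b ^ 2 + c ^ 2) * ∫ s in (0:ℝ)..t, v s ^ 2 := by
  have hv2 : Continuous fun s => v s ^ 2 := hv.pow 2
  have hdelay : ∫ s in (0:ℝ)..t, v (s - τ) ^ 2 ≤ ∫ s in (0:ℝ)..t, v s ^ 2 :=
    integral_comp_sub_le_integral hτ hv2 (fun s => sq_nonneg _)
      (fun s hs => by simp [hpre s hs]) t
  have hw3 := hw.const_mul 3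
  have hv3 := (hv2.intervalIntegrable (μ := volume) 0 t).const_mul (3 * b ^ 2)
  have hvτ : Continuous fun s => v (s - τ) ^ 2 := by fun_prop
  have hvτ3 := (hvτ.intervalIntegrable (μ := volume) 0 t).const_mul (3 * c ^ 2)
  calc ∫ s in (0:ℝ)..t, v' s ^ 2
      ≤ ∫ s in (0:ℝ)..t, (3 * (v' s + b * v s + c * v (s - τ)) ^ 2 + 3 * b ^ 2 * v s ^ 2
          + 3 * c ^ 2 * v (s - τ) ^ 2) :=
        integral_mono_on ht hv' ((hw3.add hv3).add hvτ3) fun s _ => by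
          nlinarith [sq_nonneg (v' s + 2 * b * v s + c * v (s - τ)),
            sq_nonneg (v' s + b * v s + 2 * c * v (s - τ)), sq_nonneg (b * v s - c * v (s - τ))]
    _ = 3 * (∫ s in (0:ℝ)..t, (v' s + b * v s + c * v (s - τ)) ^ 2)
          + 3 * b ^ 2 * (∫ s in (0:ℝ)..t, v s ^ 2)
          + 3 * c ^ 2 * ∫ s in (0:ℝ)..t, v (s - τ) ^ 2 := by
        rw [integral_add (hw3.add hv3) hvτ3, integral_add hw3 hv3,
          intervalIntegral.integral_const_mul, intervalIntegral.integral_const_mul,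
          intervalIntegral.integral_const_mul]
    _ ≤ _ := by nlinarith [mul_le_mul_of_nonneg_left hdelay (sq_nonneg c)]

lemma integral_sq_le_gronwallBound {v : ℝ → ℝ} {K ε T : ℝ} (hv : Continuous v) (hT : 0 ≤ T)
    (hbound : ∀ t ∈ Icc 0 T, v t ^ 2 ≤ K * (∫ s in (0:ℝ)..t, v s ^ 2) + ε) :
    ∫ s in (0:ℝ)..T, v s ^ 2 ≤ gronwallBound 0 K ε T := by
  have hv2 : Continuous fun s => v s ^ 2 := hv.pow 2
  have hG : ∀ t, HasDerivAt (fun t => ∫ s in (0:ℝ)..t, v s ^ 2) (v t ^ 2) t :=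
    fun t => (hv2.integral_hasStrictDerivAt 0 t).hasDerivAt
  have hGnn : ∀ t, 0 ≤ t → 0 ≤ ∫ s in (0:ℝ)..t, v s ^ 2 :=
    fun t ht => integral_nonneg ht fun _ _ => sq_nonneg _
  have := norm_le_gronwallBound_of_norm_deriv_right_le (δ := 0)
    (continuous_iff_continuousAt.2 fun t => (hG t).continuousAt).continuousOn
    (fun t _ => (hG t).hasDerivWithinAt) (by simp)
    (fun t ht => by
      rw [Real.norm_of_nonneg (sq_nonneg _), Real.norm_of_nonneg (hGnn t ht.1)]
      exact hbound t (Ico_subset_Icc_self ht)) T ⟨hT, le_rfl⟩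
  rwa [Real.norm_of_nonneg (hGnn T hT), sub_zero] at this

/-- Single-edge case of Lemma 6 (coercivity of the energy functional): there exists
`C₁ > 0` such that `J(v) = ∫₀ᵀ (v' + b v + c v(·-τ))² dt ≥ C₁ ‖v‖²_{H¹(0,T)}` for all
`v ∈ H¹(0,T)` with zero prehistory (`v = 0` on `[-τ,0]`, so `v(0)=0`) and `v = 0` on
`[T-τ, T]`. -/
theorem stmt_7 (τ T b c : ℝ) (hτ : 0 ≤ τ) (hT : τ < T) :
    ∃ C₁ > 0, ∀ v v' : ℝ → ℝ,
      (∀ t, HasDerivAt v (v' t) t) →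
      IntervalIntegrable (fun t => (v' t) ^ 2) volume 0 T →
      IntervalIntegrable (fun t => (v' t + b * v t + c * v (t - τ)) ^ 2) volume 0 T →
      (∀ t ∈ Set.Icc (-τ) (0 : ℝ), v t = 0) →
      (∀ t ∈ Set.Icc (T - τ) T, v t = 0) →
      (∫ t in (0:ℝ)..T, (v' t + b * v t + c * v (t - τ)) ^ 2)
        ≥ C₁ * ((∫ t in (0:ℝ)..T, (v t) ^ 2) + ∫ t in (0:ℝ)..T, (v' t) ^ 2) := by
  have hT0 : 0 < T := hτ.trans_lt hT
  set K := 3 * (b ^ 2 + c ^ 2)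
  set B := gronwallBound 0 (T * K) (3 * T) T
  have hK : 0 ≤ K := by positivity
  have hB : 0 ≤ B := gronwallBound_zero_nonneg (by positivity) (by positivity) hT0.le
  refine ⟨1 / (3 + (1 + K) * B), by positivity, ?_⟩
  intro v v' hderiv hv' hw hpre _
  set J := ∫ t in (0:ℝ)..T, (v' t + b * v t + c * v (t - τ)) ^ 2
  have hv : Continuous v := continuous_iff_continuousAt.2 fun t => (hderiv t).continuousAt
  have hsub : ∀ t ∈ Icc 0 T, uIcc 0 t ⊆ uIcc 0 T :=
    fun t ht => uIcc_subset_uIcc_left (Icc_subset_uIcc ht)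
  have henergy : ∀ t ∈ Icc 0 T,
      ∫ s in (0:ℝ)..t, v' s ^ 2 ≤ 3 * J + K * ∫ s in (0:ℝ)..t, v s ^ 2 := by
    intro t ht
    have hwJ : ∫ s in (0:ℝ)..t, (v' s + b * v s + c * v (s - τ)) ^ 2 ≤ J :=
      integral_mono_interval le_rfl ht.1 ht.2 (.of_forall fun _ => sq_nonneg _) hw
    linarith [integral_sq_deriv_le_of_delay hτ ht.1 hv hpre (hv'.mono_set (hsub t ht))
      (hw.mono_set (hsub t ht))]
  have hgrowth : ∀ t ∈ Icc 0 T,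
      v t ^ 2 ≤ T * K * (∫ s in (0:ℝ)..t, v s ^ 2) + J * (3 * T) := by
    intro t ht
    have hv0 : v 0 = 0 := hpre 0 ⟨by linarith, le_rfl⟩
    calc v t ^ 2 ≤ (t - 0) * ∫ s in (0:ℝ)..t, v' s ^ 2 :=
          sq_le_mul_integral_sq_deriv hderiv hv0 ht.1 (hv'.mono_set (hsub t ht))
      _ ≤ T * (3 * J + K * ∫ s in (0:ℝ)..t, v s ^ 2) :=
          mul_le_mul (by linarith [ht.2]) (henergy t ht)
            (integral_nonneg ht.1 fun _ _ => sq_nonneg _) hT0.le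
      _ = _ := by ring
  have hL2 : ∫ s in (0:ℝ)..T, v s ^ 2 ≤ J * B := by
    rw [← gronwallBound_zero_mul]
    exact integral_sq_le_gronwallBound hv hT0.le hgrowth
  have hH1 := henergy T ⟨hT0.le, le_rfl⟩
  rw [ge_iff_le, one_div_mul_eq_div, div_le_iff₀ (by positivity)]
  linarith [mul_le_mul_of_nonneg_left hL2 hK]
end

section
/- Let τ ≥ 0, T > τ, b, c ∈ ℝ, and let 𝒲 = {v ∈ H¹(0,T) : v(0) = 0 and v = 0 on [T−τ, T]} with the convention v := 0 on [−τ, 0]. Define B(y, v) = ∫₀^T (y′ + b y + c y(·−τ))(v′ + b v + c v(·−τ)) dt on 𝒲 × 𝒲. Then B is an inner product on 𝒲, and the associated norm is equivalent to the H¹(0,T) norm on 𝒲. -/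
open MeasureTheory intervalIntegral
open Set Real Topology

/-! Write `w = v' + b v + c v(· - τ)` and `u t = ∫₀ᵗ v'²`. As `v` vanishes on `[-τ, 0]`,
Cauchy–Schwarz gives `v(s)² ≤ T u(s)` and `v(s - τ)² ≤ T u(s)`, hence `v'² ≤ 2 w² + K u` with
`K = 4 (b² + c²) T`. Integrating, `u t ≤ 2 ‖w‖² + K ∫₀ᵗ u`, and Grönwall's inequality gives
`‖v'‖² ≤ 2 e^{KT} ‖w‖²`; together with `‖v‖² ≤ T² ‖v'‖²` this is coercivity, which also yields
definiteness. The upper bound follows from `w² ≤ 3 (v'² + b² v² + c² v(· - τ)²)`. -/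

theorem IntervalIntegrable.of_sq_s14 {g : ℝ → ℝ} {a b : ℝ}
    (hg : AEStronglyMeasurable g (volume.restrict (uIoc a b)))
    (hg2 : IntervalIntegrable (fun t => g t ^ 2) volume a b) :
    IntervalIntegrable g volume a b := by
  rw [intervalIntegrable_iff] at hg2 ⊢
  have : IsFiniteMeasure (volume.restrict (uIoc a b)) :=
    isFiniteMeasure_restrict.2 (by simp [Real.volume_uIoc])
  exact ((memLp_two_iff_integrable_sq hg).2 hg2).integrable one_le_two

theorem sq_intervalIntegral_le_mul_integral_sq {g : ℝ → ℝ} {a b : ℝ} (hab : a ≤ b)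
    (hg : IntervalIntegrable g volume a b)
    (hg2 : IntervalIntegrable (fun t => g t ^ 2) volume a b) :
    (∫ t in a..b, g t) ^ 2 ≤ (b - a) * ∫ t in a..b, g t ^ 2 := by
  -- `x ↦ ∫ (g - x)²` is a nonnegative quadratic polynomial, so its discriminant is `≤ 0`.
  have hquad : ∀ x : ℝ,
      0 ≤ (b - a) * (x * x) + (-2 * ∫ t in a..b, g t) * x + ∫ t in a..b, g t ^ 2 := by
    intro x
    have hexpand : ∫ t in a..b, (g t - x) ^ 2
        = (∫ t in a..b, g t ^ 2) - 2 * x * (∫ t in a..b, g t) + (b - a) * x ^ 2 := by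
      simp only [sub_sq]
      rw [integral_add (hg2.sub (hg.const_mul _ |>.mul_const _)) intervalIntegrable_const,
        integral_sub hg2 (hg.const_mul _ |>.mul_const _), intervalIntegral.integral_mul_const,
        intervalIntegral.integral_const_mul, intervalIntegral.integral_const, smul_eq_mul]
      ring
    have : 0 ≤ ∫ t in a..b, (g t - x) ^ 2 := integral_nonneg hab fun t _ => sq_nonneg _
    linarith
  have := discrim_le_zero hquad
  rw [discrim] at this
  linarith

theorem sq_le_mul_integral_sq_of_hasDerivAt {f f' : ℝ → ℝ} {a s : ℝ}
    (hd : ∀ t ∈ uIcc a s, HasDerivAt f (f' t) t) (ha : f a = 0) (has : a ≤ s)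
    (hf' : IntervalIntegrable f' volume a s)
    (hf'2 : IntervalIntegrable (fun t => f' t ^ 2) volume a s) :
    f s ^ 2 ≤ (s - a) * ∫ t in a..s, f' t ^ 2 := by
  rw [← sub_zero (f s), ← ha, ← integral_eq_sub_of_hasDerivAt hd hf']
  exact sq_intervalIntegral_le_mul_integral_sq has hf' hf'2

theorem le_mul_exp_of_le_add_mul_integral {u : ℝ → ℝ} {a b A K : ℝ} (hK : 0 ≤ K)
    (hu : ContinuousOn u (Icc a b))
    (h : ∀ t ∈ Icc a b, u t ≤ A + K * ∫ s in a..t, u s) :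
    ∀ t ∈ Icc a b, u t ≤ A * exp (K * (t - a)) := by
  intro t ht
  have hab : a ≤ b := ht.1.trans ht.2
  -- Grönwall applies to the right-hand side `U`, whose right derivative is `K u ≤ K U`.
  set U : ℝ → ℝ := fun t => A + K * ∫ s in a..t, u s
  have hint : IntervalIntegrable u volume a b := hu.intervalIntegrable_of_Icc hab
  have hUcont : ContinuousOn U (Icc a b) := by
    have := continuousOn_primitive_interval' hint left_mem_uIcc
    rw [uIcc_of_le hab] at this
    exact continuousOn_const.add (continuousOn_const.mul this)
  have hUderiv : ∀ x ∈ Ico a b, HasDerivWithinAt U (K * u x) (Ici x) x := by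
    intro x hx
    have hmem : Icc a b ∈ 𝓝[>] x :=
      Filter.mem_of_superset (Ioo_mem_nhdsGT hx.2) fun y hy => ⟨hx.1.trans hy.1.le, hy.2.le⟩
    have hprim : HasDerivWithinAt (fun t => ∫ s in a..t, u s) (u x) (Ici x) x :=
      integral_hasDerivWithinAt_right
        ((hu.mono (Icc_subset_Icc_right hx.2.le)).intervalIntegrable_of_Icc hx.1)
        ⟨Icc a b, hmem, hu.aestronglyMeasurable measurableSet_Icc⟩
        ((hu x (Ico_subset_Icc_self hx)).mono_of_mem_nhdsWithin hmem)
    exact (hprim.const_mul K).const_add A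
  have := le_gronwallBound_of_liminf_deriv_right_le (δ := A) hUcont
    (fun x hx r hr => (hUderiv x hx).liminf_right_slope_le hr) (by simp [U])
    (fun x hx => by
      rw [add_zero]
      exact mul_le_mul_of_nonneg_left (h x (Ico_subset_Icc_self hx)) hK) t ht
  rw [gronwallBound_ε0] at this
  exact (h t ht).trans this

theorem integral_sq_le_integral_sq_of_mem_Icc {f : ℝ → ℝ} {a b s : ℝ}
    (hf : IntervalIntegrable (fun t => f t ^ 2) volume a b) (hs : s ∈ Icc a b) :
    ∫ t in a..s, f t ^ 2 ≤ ∫ t in a..b, f t ^ 2 :=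
  integral_mono_interval le_rfl hs.1 hs.2 (ae_of_all _ fun t => sq_nonneg (f t)) hf

theorem IntervalIntegrable.mono_set_left_of_mem_Icc {f : ℝ → ℝ} {a b t : ℝ}
    (hf : IntervalIntegrable f volume a b) (ht : t ∈ Icc a b) :
    IntervalIntegrable f volume a t :=
  hf.mono_set (uIcc_subset_uIcc_left (Icc_subset_uIcc ht))

theorem measurable_of_forall_hasDerivAt {f f' : ℝ → ℝ} (hd : ∀ t, HasDerivAt f (f' t) t) :
    Measurable f' := by
  rw [show f' = deriv f from funext fun t => (hd t).deriv.symm]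
  exact measurable_deriv f

section DelayEnergy

variable {v v' : ℝ → ℝ} {τ T b c : ℝ}

theorem sq_le_mul_integral_deriv_sq (hd : ∀ t, HasDerivAt v (v' t) t)
    (hv'2 : IntervalIntegrable (fun t => v' t ^ 2) volume 0 T) (hv0 : v 0 = 0)
    {s : ℝ} (hs : s ∈ Icc 0 T) :
    v s ^ 2 ≤ T * ∫ t in 0..s, v' t ^ 2 := by
  have hs2 := hv'2.mono_set_left_of_mem_Icc hs
  have hs1 : IntervalIntegrable v' volume 0 s :=
    .of_sq (measurable_of_forall_hasDerivAt hd).aestronglyMeasurable hs2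
  calc v s ^ 2 ≤ (s - 0) * ∫ t in 0..s, v' t ^ 2 :=
        sq_le_mul_integral_sq_of_hasDerivAt (fun t _ => hd t) hv0 hs.1 hs1 hs2
    _ ≤ T * ∫ t in 0..s, v' t ^ 2 := by
        gcongr
        · exact integral_nonneg hs.1 fun t _ => sq_nonneg _
        · linarith [hs.2]

theorem sq_delay_le_mul_integral_deriv_sq (hτ : 0 ≤ τ) (hd : ∀ t, HasDerivAt v (v' t) t)
    (hv'2 : IntervalIntegrable (fun t => v' t ^ 2) volume 0 T)
    (hz : ∀ t ∈ Icc (-τ) 0, v t = 0) {s : ℝ} (hs : s ∈ Icc 0 T) :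
    v (s - τ) ^ 2 ≤ T * ∫ t in 0..s, v' t ^ 2 := by
  rcases le_or_gt (s - τ) 0 with hneg | hpos
  · rw [hz _ ⟨by linarith [hs.1], hneg⟩, sq, zero_mul]
    exact mul_nonneg (hs.1.trans hs.2) (integral_nonneg hs.1 fun t _ => sq_nonneg _)
  · calc v (s - τ) ^ 2 ≤ T * ∫ t in 0..s - τ, v' t ^ 2 :=
          sq_le_mul_integral_deriv_sq hd hv'2 (hz 0 ⟨by linarith, le_rfl⟩)
            ⟨hpos.le, by linarith [hs.2]⟩
      _ ≤ T * ∫ t in 0..s, v' t ^ 2 := by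
          gcongr
          · exact hs.1.trans hs.2
          · exact integral_mono_interval le_rfl hpos.le (by linarith)
              (ae_of_all _ fun t => sq_nonneg _) (hv'2.mono_set_left_of_mem_Icc hs)

theorem integral_deriv_sq_le_two_mul_energy_mul_exp (hT : 0 ≤ T) (hτ : 0 ≤ τ)
    (hd : ∀ t, HasDerivAt v (v' t) t)
    (hv'2 : IntervalIntegrable (fun t => v' t ^ 2) volume 0 T)
    (hw2 : IntervalIntegrable (fun t => (v' t + b * v t + c * v (t - τ)) ^ 2) volume 0 T)
    (hz : ∀ t ∈ Icc (-τ) 0, v t = 0) :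
    ∫ t in 0..T, v' t ^ 2 ≤
      2 * (∫ t in 0..T, (v' t + b * v t + c * v (t - τ)) ^ 2) *
        exp (4 * (b ^ 2 + c ^ 2) * T * T) := by
  set K := 4 * (b ^ 2 + c ^ 2) * T
  set Q := ∫ t in 0..T, (v' t + b * v t + c * v (t - τ)) ^ 2
  set u : ℝ → ℝ := fun t => ∫ s in 0..t, v' s ^ 2
  have hu_cont : ContinuousOn u (Icc 0 T) := by
    simpa only [uIcc_of_le hT] using continuousOn_primitive_interval' hv'2 left_mem_uIcc
  have hpt : ∀ s ∈ Icc 0 T, v' s ^ 2 ≤ 2 * (v' s + b * v s + c * v (s - τ)) ^ 2 + K * u s := by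
    intro s hs
    have h₁ := sq_le_mul_integral_deriv_sq hd hv'2 (hz 0 ⟨by linarith, le_rfl⟩) hs
    have h₂ := sq_delay_le_mul_integral_deriv_sq hτ hd hv'2 hz hs
    have : v' s ^ 2 ≤ 2 * (v' s + b * v s + c * v (s - τ)) ^ 2
        + 4 * b ^ 2 * v s ^ 2 + 4 * c ^ 2 * v (s - τ) ^ 2 := by
      nlinarith [sq_nonneg (v' s + 2 * (b * v s + c * v (s - τ))),
        sq_nonneg (b * v s - c * v (s - τ))]
    nlinarith [mul_le_mul_of_nonneg_left h₁ (sq_nonneg b),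
      mul_le_mul_of_nonneg_left h₂ (sq_nonneg c)]
  have hgronwall : ∀ t ∈ Icc 0 T, u t ≤ 2 * Q + K * ∫ s in 0..t, u s := by
    intro t ht
    have hw2t := hw2.mono_set_left_of_mem_Icc ht
    have hut : IntervalIntegrable u volume 0 t :=
      (hu_cont.mono (Icc_subset_Icc_right ht.2)).intervalIntegrable_of_Icc ht.1
    have hQt : ∫ s in 0..t, (v' s + b * v s + c * v (s - τ)) ^ 2 ≤ Q :=
      integral_mono_interval le_rfl ht.1 ht.2 (ae_of_all _ fun s => sq_nonneg _) hw2
    calc u t ≤ ∫ s in 0..t, (2 * (v' s + b * v s + c * v (s - τ)) ^ 2 + K * u s) :=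
          integral_mono_on ht.1 (hv'2.mono_set_left_of_mem_Icc ht)
            ((hw2t.const_mul 2).add (hut.const_mul K))
            fun s hs => hpt s ⟨hs.1, hs.2.trans ht.2⟩
      _ = 2 * (∫ s in 0..t, (v' s + b * v s + c * v (s - τ)) ^ 2) + K * ∫ s in 0..t, u s := by
          rw [integral_add (hw2t.const_mul 2) (hut.const_mul K),
            intervalIntegral.integral_const_mul, intervalIntegral.integral_const_mul]
      _ ≤ 2 * Q + K * ∫ s in 0..t, u s := by linarith
  have := le_mul_exp_of_le_add_mul_integral (by positivity) hu_cont hgronwall T ⟨hT, le_rfl⟩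
  rwa [sub_zero] at this

theorem integral_sq_le_sq_mul_integral_deriv_sq (hT : 0 ≤ T) (hd : ∀ t, HasDerivAt v (v' t) t)
    (hv'2 : IntervalIntegrable (fun t => v' t ^ 2) volume 0 T) (hv0 : v 0 = 0) :
    ∫ t in 0..T, v t ^ 2 ≤ T ^ 2 * ∫ t in 0..T, v' t ^ 2 := by
  have hv : Continuous v := continuous_iff_continuousAt.2 fun t => (hd t).continuousAt
  calc ∫ t in 0..T, v t ^ 2 ≤ ∫ _ in 0..T, T * ∫ t in 0..T, v' t ^ 2 :=
        integral_mono_on hT ((hv.pow 2).intervalIntegrable 0 T) intervalIntegrable_const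
          fun s hs => (sq_le_mul_integral_deriv_sq hd hv'2 hv0 hs).trans
            (mul_le_mul_of_nonneg_left (integral_sq_le_integral_sq_of_mem_Icc hv'2 hs) hT)
    _ = T ^ 2 * ∫ t in 0..T, v' t ^ 2 := by
        rw [intervalIntegral.integral_const, smul_eq_mul]; ring

theorem sum_integral_sq_le_mul_energy (hT : 0 ≤ T) (hτ : 0 ≤ τ)
    (hd : ∀ t, HasDerivAt v (v' t) t)
    (hv'2 : IntervalIntegrable (fun t => v' t ^ 2) volume 0 T)
    (hw2 : IntervalIntegrable (fun t => (v' t + b * v t + c * v (t - τ)) ^ 2) volume 0 T)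
    (hz : ∀ t ∈ Icc (-τ) 0, v t = 0) :
    (∫ t in 0..T, v t ^ 2) + ∫ t in 0..T, v' t ^ 2 ≤
      2 * (1 + T ^ 2) * exp (4 * (b ^ 2 + c ^ 2) * T * T) *
        ∫ t in 0..T, (v' t + b * v t + c * v (t - τ)) ^ 2 := by
  have hv := integral_sq_le_sq_mul_integral_deriv_sq hT hd hv'2 (hz 0 ⟨by linarith, le_rfl⟩)
  have hv' := integral_deriv_sq_le_two_mul_energy_mul_exp hT hτ hd hv'2 hw2 hz
  have hv'_nonneg : 0 ≤ ∫ t in 0..T, v' t ^ 2 := integral_nonneg hT fun t _ => sq_nonneg _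
  calc (∫ t in 0..T, v t ^ 2) + ∫ t in 0..T, v' t ^ 2
      ≤ (1 + T ^ 2) * ∫ t in 0..T, v' t ^ 2 := by linarith
    _ ≤ (1 + T ^ 2) * (2 * (∫ t in 0..T, (v' t + b * v t + c * v (t - τ)) ^ 2) *
          exp (4 * (b ^ 2 + c ^ 2) * T * T)) := by gcongr
    _ = _ := by ring

theorem energy_le_mul_sum_integral_sq (hT : 0 ≤ T) (hτ : 0 ≤ τ)
    (hd : ∀ t, HasDerivAt v (v' t) t)
    (hv'2 : IntervalIntegrable (fun t => v' t ^ 2) volume 0 T)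
    (hw2 : IntervalIntegrable (fun t => (v' t + b * v t + c * v (t - τ)) ^ 2) volume 0 T)
    (hz : ∀ t ∈ Icc (-τ) 0, v t = 0) :
    ∫ t in 0..T, (v' t + b * v t + c * v (t - τ)) ^ 2 ≤
      3 * (1 + b ^ 2 + c ^ 2 * T ^ 2) *
        ((∫ t in 0..T, v t ^ 2) + ∫ t in 0..T, v' t ^ 2) := by
  set D := ∫ t in 0..T, v' t ^ 2
  have hv : Continuous v := continuous_iff_continuousAt.2 fun t => (hd t).continuousAt
  have hv2 : IntervalIntegrable (fun t => v t ^ 2) volume 0 T := (hv.pow 2).intervalIntegrable 0 T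
  have hpt : ∀ s ∈ Icc 0 T, (v' s + b * v s + c * v (s - τ)) ^ 2 ≤
      3 * v' s ^ 2 + 3 * b ^ 2 * v s ^ 2 + 3 * c ^ 2 * (T * D) := by
    intro s hs
    have hdelay := (sq_delay_le_mul_integral_deriv_sq hτ hd hv'2 hz hs).trans
      (mul_le_mul_of_nonneg_left (integral_sq_le_integral_sq_of_mem_Icc hv'2 hs) hT)
    nlinarith [sq_nonneg (v' s - b * v s), sq_nonneg (v' s - c * v (s - τ)),
      sq_nonneg (b * v s - c * v (s - τ)), mul_le_mul_of_nonneg_left hdelay (sq_nonneg c)]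
  have hD : 0 ≤ D := integral_nonneg hT fun t _ => sq_nonneg _
  have hV : 0 ≤ ∫ t in 0..T, v t ^ 2 := integral_nonneg hT fun t _ => sq_nonneg _
  calc ∫ t in 0..T, (v' t + b * v t + c * v (t - τ)) ^ 2
      ≤ ∫ s in 0..T, (3 * v' s ^ 2 + 3 * b ^ 2 * v s ^ 2 + 3 * c ^ 2 * (T * D)) :=
        integral_mono_on hT hw2
          (((hv'2.const_mul 3).add (hv2.const_mul _)).add intervalIntegrable_const) hpt
    _ = 3 * D + 3 * b ^ 2 * (∫ t in 0..T, v t ^ 2) + 3 * c ^ 2 * T ^ 2 * D := by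
        rw [integral_add ((hv'2.const_mul 3).add (hv2.const_mul _)) intervalIntegrable_const,
          integral_add (hv'2.const_mul 3) (hv2.const_mul _), intervalIntegral.integral_const_mul,
          intervalIntegral.integral_const_mul, intervalIntegral.integral_const, smul_eq_mul]
        ring
    _ ≤ _ := by nlinarith [mul_nonneg (sq_nonneg b) hD, mul_nonneg (sq_nonneg (c * T)) hV]

end DelayEnergy

/-- Single-edge case of Remark 4 (Lemmas 4 and 6 combined): on the admissible subspace
`𝒲 = {v ∈ H¹(0,T) : v = 0 on [-τ,0] ∪ [T-τ,T]}`, the energy bilinear form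
`B(v,v) = ∫₀ᵀ (v' + b v + c v(·-τ))² dt` is two-sidedly comparable to the `H¹(0,T)`
norm (hence is an inner product whose norm is equivalent to the `H¹` norm). -/
theorem stmt_14 (τ T b c : ℝ) (hτ : 0 ≤ τ) (hT : τ < T) :
    ∃ c₀ > 0, ∃ C₀ > 0, ∀ v v' : ℝ → ℝ,
      (∀ t, HasDerivAt v (v' t) t) →
      IntervalIntegrable (fun t => (v' t) ^ 2) volume 0 T →
      IntervalIntegrable (fun t => (v' t + b * v t + c * v (t - τ)) ^ 2) volume 0 T →
      (∀ t ∈ Set.Icc (-τ) (0 : ℝ), v t = 0) →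
      (∀ t ∈ Set.Icc (T - τ) T, v t = 0) →
      (c₀ * ((∫ t in (0:ℝ)..T, (v t) ^ 2) + ∫ t in (0:ℝ)..T, (v' t) ^ 2)
          ≤ ∫ t in (0:ℝ)..T, (v' t + b * v t + c * v (t - τ)) ^ 2) ∧
      ((∫ t in (0:ℝ)..T, (v' t + b * v t + c * v (t - τ)) ^ 2)
          ≤ C₀ * ((∫ t in (0:ℝ)..T, (v t) ^ 2) + ∫ t in (0:ℝ)..T, (v' t) ^ 2)) ∧
      ((∫ t in (0:ℝ)..T, (v' t + b * v t + c * v (t - τ)) ^ 2) = 0 →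
          ∀ t ∈ Set.Icc (0:ℝ) T, v t = 0) := by
  have hT0 : 0 ≤ T := hτ.trans hT.le
  refine ⟨(2 * (1 + T ^ 2) * exp (4 * (b ^ 2 + c ^ 2) * T * T))⁻¹, by positivity,
    3 * (1 + b ^ 2 + c ^ 2 * T ^ 2), by positivity, ?_⟩
  intro v v' hd hv'2 hw2 hz _
  have hcoer := sum_integral_sq_le_mul_energy hT0 hτ hd hv'2 hw2 hz
  refine ⟨(inv_mul_le_iff₀ (by positivity)).2 hcoer,
    energy_le_mul_sum_integral_sq hT0 hτ hd hv'2 hw2 hz, fun hQ t ht => ?_⟩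
  have hv : 0 ≤ ∫ t in 0..T, v t ^ 2 := integral_nonneg hT0 fun t _ => sq_nonneg _
  have hv' : 0 ≤ ∫ t in 0..T, v' t ^ 2 := integral_nonneg hT0 fun t _ => sq_nonneg _
  have hD : ∫ t in 0..T, v' t ^ 2 = 0 := by rw [hQ, mul_zero] at hcoer; linarith
  have := (sq_le_mul_integral_deriv_sq hd hv'2 (hz 0 ⟨by linarith, le_rfl⟩) ht).trans
    (mul_le_mul_of_nonneg_left (integral_sq_le_integral_sq_of_mem_Icc hv'2 ht) hT0)
  rw [hD, mul_zero] at this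
  exact pow_eq_zero_iff two_ne_zero |>.1 (le_antisymm this (sq_nonneg _))
end
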